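/- Suppose there exists a Lebesgue-nonmeasurable filter with the Baire property (e.g., under Martin's Axiom). Then there exists a nonprincipal filter on ω which is both Lebesgue-null and meager but cannot be covered by a Lebesgue-null set of type F_σ. -/

import Mathlib

open MeasureTheory Filter Set
open scoped ENNReal

/-- `μ` is the product (Bernoulli) measure on `Bool^ι` determined by the sequence `p`:
a probability measure giving each cylinder set its natural product value. -/
def IsBernoulli {ι : Type*} (μ : Measure (ι → Bool)) (p : ι → ℝ≥0∞) : Prop :=
  IsProbabilityMeasure μ ∧
    ∀ (s : Finset ι) (f : ι → Bool),
      μ {x | ∀ i ∈ s, x i = f i} = ∏ i ∈ s, (if f i then p i else 1 - p i)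

/-- The subset of `2^ω` corresponding to a filter on `ω`, via characteristic functions. -/
def filterSet (F : Filter ℕ) : Set (ℕ → Bool) := {x | {n | x n = true} ∈ F}

/-!
Let `G` be a nonmeasurable filter with the Baire property and `H` a nonprincipal ultrafilter.
Cut `ℕ` into the blocks `[n², (n+1)²)`, the fibres of `Nat.sqrt`, and let
`F = G ⊔ comap Nat.sqrt H`: the sets of `G` containing `H`-many whole blocks. Since
`∑ 2^-(2n+1) < ∞`, Borel–Cantelli makes `F` null, and `F ⊆ G` is meagre by the topological 0-1 law
for sets invariant under finite modifications. Suppose `F ⊆ ⋃ Cₖ` with `Cₖ` closed and null.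
Filling in finitely many blocks with ones keeps each `Cₖ` null, so by upper semicontinuity of
`y ↦ μ {x | x ⊔ y ∈ Cₖ}` this stays small when the blocks in a long enough window are left alone.
A diagonal construction then gives `B ∈ H` such that filling in the blocks of `B` pulls every `Cₖ`
back to measure `< μ*(G)/2`. But this filling maps `G` into `F`, so `μ*(G) ≤ μ*(G)/2`,
contradicting `μ*(G) > 0`.
-/

open Topology
open scoped symmDiff

section CantorSpace

variable {ι : Type*}

def finitelySupported (ι : Type*) : Set (ι → Bool) := {e | {i | e i = true}.Finite}

theorem countable_finitelySupported [Countable ι] : (finitelySupported ι).Countable := by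
  refine MapsTo.countable_of_injOn (f := fun e : ι → Bool => {i | e i = true})
    (t := {s : Set ι | s.Finite}) (fun e he => he) (fun e _ e' _ h => funext fun i => ?_)
    (by simpa using countable_ofPred_finite_subset (countable_univ (α := ι)))
  simpa using congrArg (i ∈ ·) h

-- On `ι → Bool`, `e ∆ ·` is the translation flipping the coordinates where `e` is `true`.
theorem continuous_symmDiff_left (e : ι → Bool) : Continuous (e ∆ ·) :=
  continuous_pi fun i => (continuous_of_discreteTopology (f := (e i ∆ ·))).comp (continuous_apply i)

theorem isOpenMap_symmDiff_left (e : ι → Bool) : IsOpenMap (e ∆ ·) := fun U hU => by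
  rw [image_eq_preimage_of_inverse (symmDiff_symmDiff_cancel_left e)
    (symmDiff_symmDiff_cancel_left e)]
  exact hU.preimage (continuous_symmDiff_left e)

theorem continuous_sup_pi_bool : Continuous fun p : (ι → Bool) × (ι → Bool) => p.1 ⊔ p.2 :=
  have hBool : Continuous fun q : Bool × Bool => q.1 ⊔ q.2 := continuous_of_discreteTopology
  continuous_pi fun i => show Continuous fun p : (ι → Bool) × (ι → Bool) => p.1 i ⊔ p.2 i from
    hBool.comp (f := fun p : (ι → Bool) × (ι → Bool) => (p.1 i, p.2 i)) (by fun_prop)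

theorem exists_symmDiff_mem_of_isOpen {U : Set (ι → Bool)} (hU : IsOpen U) (hne : U.Nonempty)
    (x : ι → Bool) : ∃ e ∈ finitelySupported ι, e ∆ x ∈ U := by
  classical
  obtain ⟨y, hy⟩ := hne
  obtain ⟨I, u, hu, hIU⟩ := isOpen_pi_iff.1 hU y hy
  refine ⟨fun i => if i ∈ I then x i ∆ y i else false, I.finite_toSet.subset fun i hi => ?_,
    hIU fun i hi => ?_⟩
  · by_contra h
    simp [show i ∉ I from h] at hi
  · have : (x i ∆ y i) ∆ x i = y i := by cases x i <;> cases y i <;> rfl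
    simpa only [Pi.symmDiff_apply, Finset.mem_coe.1 hi, if_true, this] using (hu i hi).2

theorem isMeagre_compl_of_mapsTo_symmDiff [Countable ι] {S : Set (ι → Bool)}
    (hS : BaireMeasurableSet S) (hinv : ∀ e ∈ finitelySupported ι, MapsTo (e ∆ ·) S S)
    (hnm : ¬IsMeagre S) : IsMeagre Sᶜ := by
  obtain ⟨U, hU, hSU⟩ := hS.residualEq_isOpen
  have hSU' : ∀ᶠ x in residual _, x ∈ S ↔ x ∈ U := eventuallyEq_set.1 hSU
  have hne : U.Nonempty := nonempty_iff_ne_empty.2 fun h =>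
    hnm (hSU'.mono fun x hx hxS => by simpa [h] using hx.1 hxS)
  have hUS : IsMeagre (U \ S) := hSU'.mono fun x hx hxUS => hxUS.2 (hx.2 hxUS.1)
  have hcover : Sᶜ ⊆ ⋃ e ∈ finitelySupported ι, (e ∆ ·) ⁻¹' (U \ S) := fun x hx => by
    obtain ⟨e, he, hexU⟩ := exists_symmDiff_mem_of_isOpen hU hne x
    refine mem_biUnion he ⟨hexU, fun hexS => hx ?_⟩
    simpa [symmDiff_symmDiff_cancel_left] using hinv e he hexS
  refine IsMeagre.mono hcover ?_
  simp only [IsMeagre, compl_iUnion₂]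
  exact (countable_bInter_mem countable_finitelySupported).2 fun e _ =>
    hUS.preimage_of_isOpenMap (continuous_symmDiff_left e) (isOpenMap_symmDiff_left e)

end CantorSpace

section Bernoulli

variable {ι : Type*} {μ ν : Measure (ι → Bool)}

theorem IsBernoulli.unique {p : ι → ℝ≥0∞} (hμ : IsBernoulli μ p) (hν : IsBernoulli ν p) :
    μ = ν := by
  have := hμ.1
  have := hν.1
  refine IsProjectiveLimit.unique (P := fun s : Finset ι => ν.map s.restrict)
    (fun s => Measure.ext_iff_singleton.2 fun g => ?_) fun s => rfl
  classical
  obtain ⟨x, rfl⟩ : ∃ x : ι → Bool, s.restrict x = g :=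
    ⟨fun i => if h : i ∈ s then g ⟨i, h⟩ else false, by ext; simp⟩
  have hcyl : s.restrict ⁻¹' ({s.restrict x} : Set (s → Bool)) = {y | ∀ i ∈ s, y i = x i} := by
    ext y
    simp [funext_iff]
  rw [Measure.map_apply (Finset.measurable_restrict s) (measurableSet_singleton _),
    Measure.map_apply (Finset.measurable_restrict s) (measurableSet_singleton _), hcyl, hμ.2, hν.2]

theorem IsBernoulli.measure_setOf_forall_eq (hμ : IsBernoulli μ fun _ => 1 / 2) (s : Finset ι)
    (f : ι → Bool) : μ {x | ∀ i ∈ s, x i = f i} = 2⁻¹ ^ s.card := by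
  rw [hμ.2, Finset.prod_congr rfl fun i _ => ?_, Finset.prod_const]
  cases f i <;> simp [ENNReal.one_sub_inv_two]

theorem measurableSet_setOf_forall_eq (s : Finset ι) (f : ι → Bool) :
    MeasurableSet {x : ι → Bool | ∀ i ∈ s, x i = f i} := by
  simp only [ofPred_forall]
  exact .biInter s.countable_toSet fun i _ =>
    measurableSet_eq_fun (measurable_pi_apply i) measurable_const

theorem measurable_symmDiff_left (e : ι → Bool) : Measurable (e ∆ ·) :=
  measurable_pi_lambda _ fun i => (measurable_of_finite (e i ∆ ·)).comp (measurable_pi_apply i)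

theorem IsBernoulli.measurePreserving_symmDiff_left (hμ : IsBernoulli μ fun _ => 1 / 2)
    (e : ι → Bool) : MeasurePreserving (e ∆ ·) μ μ := by
  have := hμ.1
  have hm : Measurable (e ∆ ·) := measurable_symmDiff_left e
  refine ⟨hm, IsBernoulli.unique
    ⟨Measure.isProbabilityMeasure_map hm.aemeasurable, fun s f => ?_⟩ hμ⟩
  have hcyl : (e ∆ ·) ⁻¹' {x | ∀ i ∈ s, x i = f i} = {x | ∀ i ∈ s, x i = (e ∆ f) i} := by
    ext x
    simp only [mem_preimage, mem_ofPred_eq, Pi.symmDiff_apply]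
    refine forall₂_congr fun i _ => ?_
    cases e i <;> cases x i <;> cases f i <;> decide
  rw [Measure.map_apply hm (measurableSet_setOf_forall_eq s f), hcyl,
    hμ.measure_setOf_forall_eq, ← hμ.measure_setOf_forall_eq s f, hμ.2]

theorem IsBernoulli.measure_preimage_sup_eq_zero [Countable ι]
    (hμ : IsBernoulli μ fun _ => 1 / 2) {y : ι → Bool} (hy : y ∈ finitelySupported ι)
    {C : Set (ι → Bool)} (hC : μ C = 0) : μ ((· ⊔ y) ⁻¹' C) = 0 := by
  have hcover : (· ⊔ y) ⁻¹' C ⊆ ⋃ e ∈ finitelySupported ι, (e ∆ ·) ⁻¹' C := fun x hx => by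
    have hyx : y \ x ∈ finitelySupported ι :=
      hy.subset fun i hi => Bool.le_iff_imp.1 (sdiff_le (a := y) (b := x) i) hi
    refine mem_biUnion hyx ?_
    rwa [mem_preimage, symmDiff_comm, symmDiff_sdiff_eq_sup]
  exact measure_mono_null hcover <| (measure_biUnion_null_iff countable_finitelySupported).2
    fun e _ => (hμ.measurePreserving_symmDiff_left e).quasiMeasurePreserving.preimage_null hC

end Bernoulli

theorem upperSemicontinuous_measure_preimage {X Y Z : Type*} [TopologicalSpace X]
    [CompactSpace X] [MeasurableSpace X] [TopologicalSpace Y] [TopologicalSpace Z]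
    (μ : Measure X) [μ.OuterRegular] {Φ : Y → X → Z} (hΦ : Continuous (Function.uncurry Φ))
    {C : Set Z} (hC : IsClosed C) : UpperSemicontinuous fun y => μ (Φ y ⁻¹' C) := by
  intro y₀ r hr
  obtain ⟨U, hCU, hU, hUr⟩ := exists_isOpen_lt_of_lt _ r hr
  have hK : ∀ᶠ y in 𝓝 y₀, ∀ x ∈ Uᶜ, Φ y x ∈ Cᶜ :=
    hU.isClosed_compl.isCompact.eventually_forall_of_forall_eventually fun x hx =>
      hΦ.continuousAt.eventually_mem (hC.isOpen_compl.mem_nhds fun hxC => hx (hCU hxC))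
  exact hK.mono fun y hy =>
    (measure_mono fun x hx => not_not.1 fun hxU => hy x hxU hx).trans_lt hUr

section Blocks

variable {μ : Measure (ℕ → Bool)}

theorem IsBernoulli.exists_forall_measure_preimage_sup_lt (hμ : IsBernoulli μ fun _ => 1 / 2)
    {C : Set (ℕ → Bool)} (hC : IsClosed C) (h0 : μ C = 0) {ε : ℝ≥0∞} (hε : 0 < ε) (m : ℕ) :
    ∃ m', ∀ y : ℕ → Bool, (∀ i ∈ Ico m m', y i = false) → μ ((· ⊔ y) ⁻¹' C) < ε := by
  have := hμ.1
  have hU : IsOpen {y : ℕ → Bool | μ ((· ⊔ y) ⁻¹' C) < ε} :=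
    (upperSemicontinuous_measure_preimage μ (Φ := fun y x => x ⊔ y)
      (continuous_sup_pi_bool.comp continuous_swap) hC).isOpen_preimage ε
  set V : ℕ → Set (ℕ → Bool) := fun m' => {y | ∀ i ∈ Ico m m', y i = false}
  have hV : Antitone V := fun a b hab y hy i hi => hy i ⟨hi.1, hi.2.trans_le hab⟩
  have hVc : ∀ m', IsClosed (V m') := fun m' => by
    simp only [V, ofPred_forall]
    exact isClosed_biInter fun i _ => isClosed_eq (continuous_apply i) continuous_const
  -- `⋂ V` consists of finitely supported points, where the measure vanishes; compactness of
  -- the Cantor space turns the open neighbourhood `U` of `⋂ V` into a single `V m'`.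
  refine exists_subset_nhds_of_compactSpace hV.directed_ge hVc fun y hy => hU.mem_nhds ?_
  have hyfin : y ∈ finitelySupported ℕ := (finite_lt_nat m).subset fun i hi => not_le.1 fun hmi =>
    Bool.false_ne_true (mem_iInter.1 hy (i + 1) i ⟨hmi, i.lt_succ_self⟩ ▸ hi)
  simpa [hμ.measure_preimage_sup_eq_zero hyfin h0] using hε

theorem IsBernoulli.exists_forall_measure_preimage_sup_boolIndicator_lt
    (hμ : IsBernoulli μ fun _ => 1 / 2) {C : Set (ℕ → Bool)} (hC : IsClosed C) (h0 : μ C = 0)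
    {ε : ℝ≥0∞} (hε : 0 < ε) (m : ℕ) :
    ∃ m', ∀ B : Set ℕ, Disjoint B (Ico m m') →
      μ ((· ⊔ (Nat.sqrt ⁻¹' B).boolIndicator) ⁻¹' C) < ε := by
  obtain ⟨m', hm'⟩ := hμ.exists_forall_measure_preimage_sup_lt hC h0 hε (m * m)
  refine ⟨m', fun B hB => hm' _ fun i hi => ?_⟩
  have hsqrt : Nat.sqrt i ∈ Ico m m' := ⟨Nat.le_sqrt.2 hi.1, (Nat.sqrt_le_self i).trans_lt hi.2⟩
  simpa [boolIndicator] using hB.notMem_of_mem_right hsqrt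

theorem IsBernoulli.measure_filterSet_comap_sqrt_eq_zero (hμ : IsBernoulli μ fun _ => 1 / 2)
    (H : Filter ℕ) [H.NeBot] (hH : H ≤ cofinite) : μ (filterSet (comap Nat.sqrt H)) = 0 := by
  set A : ℕ → Set (ℕ → Bool) :=
    fun n => {x | ∀ i ∈ Finset.Ico (n * n) ((n + 1) * (n + 1)), x i = true}
  have hA : ∀ n, μ (A n) ≤ 2⁻¹ ^ n := fun n => by
    rw [hμ.measure_setOf_forall_eq, Nat.card_Ico]
    exact pow_le_pow_right_of_le_one' (by norm_num) (Nat.le_sub_of_add_le (by nlinarith))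
  have hsum : ∑' n, μ (A n) ≠ ∞ := ne_top_of_le_ne_top
    (by simp [ENNReal.tsum_geometric, ENNReal.one_sub_inv_two]) (ENNReal.tsum_le_tsum hA)
  refine measure_mono_null (fun x hx => ?_) (measure_limsup_atTop_eq_zero hsum)
  rw [mem_limsup_iff_frequently_mem, ← Nat.cofinite_eq_atTop]
  refine ((show ∀ᶠ n in H, _ from mem_comap'.1 hx).frequently.filter_mono hH).mono
    fun n hn i hi => hn ?_
  exact (Nat.eq_sqrt.2 (Finset.mem_Ico.1 hi)).symm

end Blocks

theorem Ultrafilter.exists_mem_forall_of_disjoint_Ico (H : Ultrafilter ℕ) {P : ℕ → Set ℕ → Prop}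
    (hP : ∀ k m, ∃ m', ∀ B : Set ℕ, Disjoint B (Ico m m') → P k B) : ∃ B ∈ H, ∀ k, P k B := by
  choose f hf using hP
  -- The gaps `[a j, a (j + 1))` are so long that missing one of them forces `P k` for all
  -- `k ≤ j`; `A` is the union of the even gaps, so `A` misses the odd ones and `Aᶜ` the even ones.
  set g : ℕ → ℕ := fun m => max (m + 1) ((Finset.range (m + 1)).sup fun k => f k m)
  set a : ℕ → ℕ := fun j => g^[j] 0
  have ha_succ : ∀ j, a (j + 1) = g (a j) := fun j => Function.iterate_succ_apply' g j 0
  have ha : StrictMono a := strictMono_nat_of_lt_succ fun j => by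
    rw [ha_succ]
    exact (Nat.lt_succ_self _).trans_le (le_max_left _ _)
  have hgap : ∀ k j, k ≤ j → ∀ B : Set ℕ, Disjoint B (Ico (a j) (a (j + 1))) → P k B :=
    fun k j hkj B hB => hf k (a j) B <| hB.mono_right <| Ico_subset_Ico_right <| by
      rw [ha_succ]
      exact le_max_of_le_right (Finset.le_sup (f := fun k => f k (a j))
        (Finset.mem_range_succ_iff.2 (hkj.trans (ha.id_le j))))
  set A := ⋃ j, Ico (a (2 * j)) (a (2 * j + 1))
  rcases H.mem_or_compl_mem A with hA | hA
  · refine ⟨A, hA, fun k => hgap k (2 * k + 1) (by omega) A ?_⟩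
    simp only [A, disjoint_iUnion_left]
    refine fun j => disjoint_left.2 fun i hi hi' => ?_
    have h1 := ha.lt_iff_lt.1 (hi'.1.trans_lt hi.2)
    have h2 := ha.lt_iff_lt.1 (hi.1.trans_lt hi'.2)
    omega
  · exact ⟨Aᶜ, hA, fun k => hgap k (2 * k) (by omega) Aᶜ
      (disjoint_compl_left.mono_right (subset_iUnion_of_subset k subset_rfl))⟩

theorem filterSet_anti : Antitone filterSet := fun _ _ h _ hx => h hx

theorem mapsTo_symmDiff_filterSet {G : Filter ℕ} (hG : G ≤ cofinite) {e : ℕ → Bool}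
    (he : e ∈ finitelySupported ℕ) : MapsTo (e ∆ ·) (filterSet G) (filterSet G) := fun x hx =>
  mem_of_superset (inter_mem hx (hG he.compl_mem_cofinite)) fun n ⟨hxn, hen⟩ => by
    simp_all

theorem isMeagre_filterSet {G : Filter ℕ} [G.NeBot] (hG : G ≤ cofinite)
    (hbm : BaireMeasurableSet (filterSet G)) : IsMeagre (filterSet G) := by
  by_contra hS
  have hSc := isMeagre_compl_of_mapsTo_symmDiff hbm (fun e => mapsTo_symmDiff_filterSet hG) hS
  have hsub : filterSet G ⊆ (⊤ ∆ ·) ⁻¹' (filterSet G)ᶜ := fun x hx hxc => by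
    have : {n | x n = true} ∩ {n | (⊤ ∆ x) n = true} = ∅ := by ext; simp
    exact empty_notMem G (this ▸ inter_mem hx hxc)
  exact hS ((hSc.preimage_of_isOpenMap (continuous_symmDiff_left ⊤)
    (isOpenMap_symmDiff_left ⊤)).mono hsub)

theorem IsBernoulli.not_filterSet_sup_comap_sqrt_subset {μ : Measure (ℕ → Bool)}
    (hμ : IsBernoulli μ fun _ => 1 / 2) {G : Filter ℕ} (hG : μ (filterSet G) ≠ 0)
    (H : Ultrafilter ℕ) {C : ℕ → Set (ℕ → Bool)} (hC : ∀ n, IsClosed (C n))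
    (h0 : ∀ n, μ (C n) = 0) : ¬ filterSet (G ⊔ comap Nat.sqrt H) ⊆ ⋃ n, C n := by
  have := hμ.1
  intro hsub
  obtain ⟨B, hBH, hB⟩ := H.exists_mem_forall_of_disjoint_Ico fun k =>
    hμ.exists_forall_measure_preimage_sup_boolIndicator_lt
      (by rw [accumulate_def]; exact (finite_le_nat k).isClosed_biUnion fun i _ => hC i)
      (measure_mono_null (accumulate_subset_iUnion k) (measure_iUnion_null h0))
      (ENNReal.half_pos hG)
  set y := (Nat.sqrt ⁻¹' B).boolIndicator
  have hGsub : filterSet G ⊆ (· ⊔ y) ⁻¹' ⋃ n, C n := fun x hx =>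
    hsub ⟨mem_of_superset hx fun n hn => by simp [show x n = true from hn],
      mem_comap.2 ⟨B, hBH, fun n hn => by simp [y, boolIndicator, show n.sqrt ∈ B from hn]⟩⟩
  have hle : μ (filterSet G) ≤ μ (filterSet G) / 2 := calc
    μ (filterSet G) ≤ μ ((· ⊔ y) ⁻¹' ⋃ n, C n) := measure_mono hGsub
    _ = ⨆ k, μ ((· ⊔ y) ⁻¹' accumulate C k) := by
      rw [preimage_iUnion, measure_iUnion_eq_iSup_accumulate]
      simp only [accumulate_def, preimage_iUnion]
    _ ≤ μ (filterSet G) / 2 := iSup_le fun k => (hB k).le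
  exact (ENNReal.half_lt_self hG (measure_ne_top μ _)).not_ge hle

theorem null_meager_not_coverable_by_null_Fsigma (μ : Measure (ℕ → Bool))
    (hμ : IsBernoulli μ fun _ => 1 / 2)
    (hG : ∃ G : Filter ℕ, G.NeBot ∧ G ≤ Filter.cofinite ∧
      ¬ NullMeasurableSet (filterSet G) μ ∧ BaireMeasurableSet (filterSet G)) :
    ∃ F : Filter ℕ, F.NeBot ∧ F ≤ Filter.cofinite ∧
      μ (filterSet F) = 0 ∧ IsMeagre (filterSet F) ∧
      ∀ K : Set (ℕ → Bool),
        (∃ C : ℕ → Set (ℕ → Bool), (∀ n, IsClosed (C n)) ∧ K = ⋃ n, C n) →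
        μ K = 0 → ¬ filterSet F ⊆ K := by
  obtain ⟨G, hGne, hGcof, hGnm, hGbm⟩ := hG
  let H := hyperfilter ℕ
  have hH : comap Nat.sqrt H ≤ cofinite :=
    (comap_mono hyperfilter_le_cofinite).trans (comap_cofinite_le _)
  refine ⟨G ⊔ comap Nat.sqrt H, hGne.mono le_sup_left, sup_le hGcof hH, ?_, ?_, ?_⟩
  · exact measure_mono_null (filterSet_anti le_sup_right)
      (hμ.measure_filterSet_comap_sqrt_eq_zero H hyperfilter_le_cofinite)
  · exact (isMeagre_filterSet hGcof hGbm).mono (filterSet_anti le_sup_left)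
  · rintro K ⟨C, hC, rfl⟩ hK
    exact hμ.not_filterSet_sup_comap_sqrt_subset (fun h => hGnm (.of_null h)) H hC
      fun n => measure_mono_null (subset_iUnion C n) hK
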